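/- arXiv:1712.00837 — 2 statements merged into one kernel-verified Lean document; each statement's English description precedes it below -/
import Mathlib

section
/- If P is a non-finitely-generated strongly bounded atomic Puiseux monoid (i.e., P is generated by a set A of positive rationals with n(A) bounded), then ρ_k(P) is infinite for all sufficiently large k. -/
/-!
Every atom lies in every generating set, so the atoms form an infinite set of positive
rationals with bounded numerators; hence infinitely many atoms share one numerator `n`. For two
such atoms `a`, `b` we have `a.den • a = n = b.den • b`, so in `k • a` the block of `a.den`
copies of `a` can be traded for `b.den` copies of `b`. As `b` varies, `b.den` takes infinitely
many values, which gives infinitely many lengths in `U_k` once `k ≥ a.den`.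
-/

/-- A Puiseux monoid: an additive submonoid of ℚ consisting of nonnegative rationals. -/
def PM.Puiseux (P : AddSubmonoid ℚ) : Prop := ∀ x ∈ P, 0 ≤ x

/-- `a` is an atom of `P`. -/
def PM.IsAtom (P : AddSubmonoid ℚ) (a : ℚ) : Prop :=
  a ∈ P ∧ a ≠ 0 ∧ ∀ x ∈ P, ∀ y ∈ P, a = x + y → x = 0 ∨ y = 0

/-- A factorization of `x` is a multiset of atoms of `P` summing to `x`. -/
def PM.IsFactorization (P : AddSubmonoid ℚ) (x : ℚ) (z : Multiset ℚ) : Prop :=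
  (∀ a ∈ z, PM.IsAtom P a) ∧ z.sum = x

/-- The set of lengths of `x`. -/
def PM.Lengths (P : AddSubmonoid ℚ) (x : ℚ) : Set ℕ :=
  {n | ∃ z : Multiset ℚ, PM.IsFactorization P x z ∧ Multiset.card z = n}

/-- `P` is atomic: it is generated by its set of atoms. -/
def PM.Atomic (P : AddSubmonoid ℚ) : Prop :=
  AddSubmonoid.closure {a | PM.IsAtom P a} = P

/-- The union of sets of lengths `U_k(P)`. -/
def PM.U (P : AddSubmonoid ℚ) (k : ℕ) : Set ℕ :=
  {l | ∃ x ∈ P, k ∈ PM.Lengths P x ∧ l ∈ PM.Lengths P x}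

namespace PM

variable {P : AddSubmonoid ℚ}

theorem IsAtom.mem_of_closure_eq {A : Set ℚ} (hA : AddSubmonoid.closure A = P) {a : ℚ}
    (ha : IsAtom P a) : a ∈ A := by
  subst hA
  induction ha.1 using AddSubmonoid.closure_induction with
  | mem x hx => exact hx
  | zero => exact absurd rfl ha.2.1
  | add x y hx hy ihx ihy =>
    rcases ha.2.2 x hx y hy rfl with rfl | rfl
    · rw [zero_add] at ha ⊢; exact ihy ha
    · rw [add_zero] at ha ⊢; exact ihx ha

theorem setOf_isAtom_infinite (hA : Atomic P)
    (hnfg : ¬ ∃ S : Finset ℚ, AddSubmonoid.closure (S : Set ℚ) = P) :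
    {a | IsAtom P a}.Infinite := fun hfin =>
  hnfg ⟨hfin.toFinset, by rwa [Set.Finite.coe_toFinset]⟩

theorem isFactorization_replicate {a : ℚ} (ha : IsAtom P a) (m : ℕ) :
    IsFactorization P (m • a) (Multiset.replicate m a) :=
  ⟨fun _ hb => Multiset.eq_of_mem_replicate hb ▸ ha, Multiset.sum_replicate m a⟩

theorem IsFactorization.add {x y : ℚ} {z w : Multiset ℚ} (hz : IsFactorization P x z)
    (hw : IsFactorization P y w) : IsFactorization P (x + y) (z + w) :=
  ⟨fun _ hb => (Multiset.mem_add.mp hb).elim (hz.1 _) (hw.1 _),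
    by rw [Multiset.sum_add, hz.2, hw.2]⟩

theorem sub_den_add_den_mem_U {a b : ℚ} (ha : IsAtom P a) (hb : IsAtom P b)
    (hnum : a.num = b.num) {k : ℕ} (hk : a.den ≤ k) : k - a.den + b.den ∈ U P k := by
  have htrade : b.den • b = a.den • a := by
    rw [nsmul_eq_mul, nsmul_eq_mul, Rat.den_mul_eq_num, Rat.den_mul_eq_num, hnum]
  have hsplit : k • a = (k - a.den) • a + b.den • b := by
    rw [htrade, ← add_nsmul, Nat.sub_add_cancel hk]
  refine ⟨k • a, AddSubmonoid.nsmul_mem P ha.1 k,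
    ⟨_, isFactorization_replicate ha k, Multiset.card_replicate k a⟩, ?_⟩
  refine ⟨_, hsplit ▸ (isFactorization_replicate ha (k - a.den)).add
    (isFactorization_replicate hb b.den), ?_⟩
  simp only [Multiset.card_add, Multiset.card_replicate]

end PM

theorem Set.Infinite.exists_num_eq_infinite {s : Set ℚ} (hs : s.Infinite)
    (hnonneg : ∀ a ∈ s, 0 ≤ a) {B : ℤ} (hB : ∀ a ∈ s, a.num ≤ B) :
    ∃ n : ℤ, {a ∈ s | a.num = n}.Infinite := by
  by_contra! hfin
  refine hs (((Set.finite_Icc 0 B).biUnion fun n _ => hfin n).subset fun a ha => ?_)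
  exact Set.mem_biUnion ⟨Rat.num_nonneg.mpr (hnonneg a ha), hB a ha⟩ ⟨ha, rfl⟩

theorem stmt4_general (P : AddSubmonoid ℚ) (hA : PM.Atomic P)
    (hnfg : ¬ ∃ S : Finset ℚ, AddSubmonoid.closure (S : Set ℚ) = P)
    (hsb : ∃ A : Set ℚ, (∀ a ∈ A, 0 < a) ∧ AddSubmonoid.closure A = P ∧
      ∃ B : ℤ, ∀ a ∈ A, a.num ≤ B) :
    ∃ d : ℕ, ∀ k ≥ d, (PM.U P k).Infinite := by
  obtain ⟨A, hApos, hAcl, B, hB⟩ := hsb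
  have hatomA : ∀ a, PM.IsAtom P a → a ∈ A := fun _ ha => ha.mem_of_closure_eq hAcl
  obtain ⟨n, hS⟩ := (PM.setOf_isAtom_infinite hA hnfg).exists_num_eq_infinite
    (fun a ha => (hApos a (hatomA a ha)).le) (fun a ha => hB a (hatomA a ha))
  obtain ⟨a, ha, hna⟩ := hS.nonempty
  refine ⟨a.den, fun k hk => ?_⟩
  have hinj : Set.InjOn (fun b : ℚ => k - a.den + b.den) {b | PM.IsAtom P b ∧ b.num = n} :=
    fun b hb c hc hbc => Rat.ext (hb.2.trans hc.2.symm) (Nat.add_left_cancel hbc)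
  refine (hS.image hinj).mono ?_
  rintro _ ⟨b, ⟨hb, hnb⟩, rfl⟩
  exact PM.sub_den_add_den_mem_U ha hb (hna.trans hnb.symm) hk

theorem stmt4 (P : AddSubmonoid ℚ) (hP : PM.Puiseux P) (hA : PM.Atomic P)
    (hnfg : ¬ ∃ S : Finset ℚ, AddSubmonoid.closure (S : Set ℚ) = P)
    (hsb : ∃ A : Set ℚ, (∀ a ∈ A, 0 < a) ∧ AddSubmonoid.closure A = P ∧
      ∃ B : ℤ, ∀ a ∈ A, a.num ≤ B) :
    ∃ d : ℕ, ∀ k ≥ d, (PM.U P k).Infinite :=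
  stmt4_general P hA hnfg hsb
end

section
/- Let P = ⟨(2/3)^n : n ∈ ℕ⟩. Then P is atomic with A(P) = {(2/3)^n : n ∈ ℕ}, and ρ_k(P) = ∞ for every k ≥ 2. -/
/-!
Every element of `P` is a finite sum of generators `(2/3)^n`, `n ≥ 1`, so every atom is a generator.
Conversely, if `(2/3)^m` were a sum of at least two generators, each summand would be a strictly
smaller power `(2/3)^n`, `n > m`; after multiplying by a large power `3^K` the left-hand side is
divisible by `2^(m+1)` and the right-hand side is not. For lengths, `2 · (2/3)^n = 3 · (2/3)^(n+1)`
gives `2 · (2/3) = ∑_{i<j} (2/3)^(i+2) + 2 · (2/3)^(j+1)`, a factorization of length `j + 2` for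
every `j`; adding `j` further copies of `2/3` yields an element with factorizations of length
`k = j + 2` and of every larger length.
-/

open Multiset

theorem AddSubmonoid.mem_closure_range_iff_exists_multiset {M ι : Type*} [AddCommMonoid M]
    {f : ι → M} {x : M} :
    x ∈ AddSubmonoid.closure (Set.range f) ↔ ∃ z : Multiset ι, (z.map f).sum = x := by
  constructor
  · intro hx
    induction hx using AddSubmonoid.closure_induction with
    | mem _ h =>
      obtain ⟨i, rfl⟩ := h
      exact ⟨{i}, by simp⟩
    | zero => exact ⟨0, by simp⟩
    | add _ _ _ _ ha hb =>
      obtain ⟨za, rfl⟩ := ha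
      obtain ⟨zb, rfl⟩ := hb
      exact ⟨za + zb, by simp⟩
  · rintro ⟨z, rfl⟩
    refine AddSubmonoid.multiset_sum_mem _ _ fun _ ha => ?_
    obtain ⟨i, -, rfl⟩ := Multiset.mem_map.mp ha
    exact AddSubmonoid.subset_closure ⟨i, rfl⟩

namespace PM

theorem mem_of_isAtom_closure {A : Set ℚ} (hA : (0 : ℚ) ∉ A) {a : ℚ}
    (ha : IsAtom (AddSubmonoid.closure A) a) : a ∈ A := by
  obtain ⟨haP, ha0, hsplit⟩ := ha
  obtain ⟨z, hzA, rfl⟩ := AddSubmonoid.exists_multiset_of_mem_closure haP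
  obtain ⟨b, t, rfl⟩ : ∃ b t, z = b ::ₘ t := by
    obtain ⟨b, hb⟩ := exists_mem_of_ne_zero (s := z) (by rintro rfl; exact ha0 sum_zero)
    exact ⟨b, Multiset.exists_cons_of_mem hb⟩
  have hb : b ∈ A := hzA b (mem_cons_self b t)
  have ht : t.sum ∈ AddSubmonoid.closure A := AddSubmonoid.multiset_sum_mem _ _
    fun c hc => AddSubmonoid.subset_closure (hzA c (mem_cons_of_mem hc))
  rw [sum_cons] at hsplit ⊢
  rcases hsplit b (AddSubmonoid.subset_closure hb) t.sum ht rfl with h | h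
  · exact absurd (h ▸ hb) hA
  · rwa [h, add_zero]

theorem setOf_isAtom_closure_eq {A : Set ℚ} (hA : (0 : ℚ) ∉ A)
    (h : ∀ a ∈ A, IsAtom (AddSubmonoid.closure A) a) :
    {a | IsAtom (AddSubmonoid.closure A) a} = A :=
  Set.Subset.antisymm (fun _ => mem_of_isAtom_closure hA) h

theorem mem_of_mem_lengths {P : AddSubmonoid ℚ} {x : ℚ} {n : ℕ} (hn : n ∈ Lengths P x) : x ∈ P := by
  obtain ⟨z, ⟨hz, rfl⟩, -⟩ := hn
  exact AddSubmonoid.multiset_sum_mem _ _ fun a ha => (hz a ha).1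

theorem mem_lengths_nsmul {P : AddSubmonoid ℚ} {a : ℚ} (ha : IsAtom P a) (n : ℕ) :
    n ∈ Lengths P (n • a) :=
  ⟨replicate n a, ⟨fun _ hb => eq_of_mem_replicate hb ▸ ha, sum_replicate n a⟩, card_replicate n a⟩

theorem add_mem_lengths {P : AddSubmonoid ℚ} {x y : ℚ} {m n : ℕ} (hm : m ∈ Lengths P x)
    (hn : n ∈ Lengths P y) : m + n ∈ Lengths P (x + y) := by
  obtain ⟨z, ⟨hz, rfl⟩, rfl⟩ := hm
  obtain ⟨w, ⟨hw, rfl⟩, rfl⟩ := hn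
  exact ⟨z + w, ⟨fun a ha => (mem_add.mp ha).elim (hz a) (hw a), sum_add z w⟩, card_add z w⟩

theorem infinite_U_of_mem_lengths {P : AddSubmonoid ℚ} {x : ℚ} {k : ℕ} (hk : k ∈ Lengths P x)
    (hx : (Lengths P x).Infinite) : (U P k).Infinite :=
  hx.mono fun _ hl => ⟨x, mem_of_mem_lengths hk, hk, hl⟩

end PM

theorem multiset_sum_two_thirds_pow_ne {m : ℕ} {z : Multiset ℕ} (hz : ∀ n ∈ z, m < n) :
    (z.map fun n => (2 / 3 : ℚ) ^ n).sum ≠ (2 / 3) ^ m := by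
  set K := m + z.sum
  have hscale : ∀ n ≤ K, (2 / 3 : ℚ) ^ n * 3 ^ K = ((2 ^ n * 3 ^ (K - n) : ℕ) : ℚ) := by
    intro n hn
    rw [← Nat.add_sub_cancel' hn, div_pow, pow_add, Nat.add_sub_cancel_left]
    push_cast
    field_simp
  intro h
  have hnat : (z.map fun n => 2 ^ n * 3 ^ (K - n)).sum = 2 ^ m * 3 ^ (K - m) := by
    have h' := congrArg (· * (3 : ℚ) ^ K) h
    simp only [← Multiset.sum_map_mul_right, hscale m (by omega)] at h'
    rw [Multiset.map_congr rfl fun n hn => hscale n ((le_sum_of_mem hn).trans (by omega))] at h'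
    apply Nat.cast_injective (R := ℚ)
    rwa [Nat.cast_multiset_sum, Multiset.map_map]
  have hdvd : 2 ^ (m + 1) ∣ 2 ^ m * 3 ^ (K - m) := hnat ▸ Multiset.dvd_sum fun _ hx => by
    obtain ⟨n, hn, rfl⟩ := Multiset.mem_map.mp hx
    exact dvd_mul_of_dvd_left (pow_dvd_pow 2 (hz n hn)) _
  rw [pow_succ, Nat.mul_dvd_mul_iff_left (by positivity)] at hdvd
  exact absurd (Nat.prime_two.dvd_of_dvd_pow hdvd) (by norm_num)

theorem card_le_one_of_multiset_sum_two_thirds_pow_eq {m : ℕ} {z : Multiset ℕ}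
    (h : (z.map fun n => (2 / 3 : ℚ) ^ n).sum = (2 / 3) ^ m) : card z ≤ 1 := by
  by_contra! hz
  refine multiset_sum_two_thirds_pow_ne (fun n hn => ?_) h
  obtain ⟨t, rfl⟩ := exists_cons_of_mem hn
  obtain ⟨c, hc⟩ := exists_mem_of_ne_zero (card_pos.mp (by simpa using hz))
  obtain ⟨s, rfl⟩ := exists_cons_of_mem hc
  have hs : 0 ≤ (s.map fun n => (2 / 3 : ℚ) ^ n).sum :=
    sum_nonneg fun _ hx => by obtain ⟨_, -, rfl⟩ := mem_map.mp hx; positivity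
  simp only [map_cons, sum_cons] at h
  have : (0 : ℚ) < (2 / 3) ^ c := by positivity
  exact (pow_lt_pow_iff_right_of_lt_one₀ (a := (2 / 3 : ℚ)) (by norm_num) (by norm_num)).mp (by linarith)

local notation "𝒫" => AddSubmonoid.closure (Set.range fun n : ℕ => (2 / 3 : ℚ) ^ (n + 1))

theorem isAtom_two_thirds_pow (m : ℕ) : PM.IsAtom 𝒫 ((2 / 3) ^ (m + 1)) := by
  refine ⟨AddSubmonoid.subset_closure ⟨m, rfl⟩, by positivity, fun x hx y hy hxy => ?_⟩
  obtain ⟨zx, rfl⟩ := AddSubmonoid.mem_closure_range_iff_exists_multiset.mp hx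
  obtain ⟨zy, rfl⟩ := AddSubmonoid.mem_closure_range_iff_exists_multiset.mp hy
  have hcard := card_le_one_of_multiset_sum_two_thirds_pow_eq (z := (zx + zy).map (· + 1))
    (by rw [hxy, map_map, map_add, sum_add]; rfl)
  rw [card_map, card_add] at hcard
  obtain h | h : card zx = 0 ∨ card zy = 0 := by omega
  · simp [card_eq_zero.mp h]
  · simp [card_eq_zero.mp h]

theorem sum_range_two_thirds_pow_add (j : ℕ) :
    ∑ i ∈ Finset.range j, (2 / 3 : ℚ) ^ (i + 2) + 2 * (2 / 3) ^ (j + 1) = 2 * (2 / 3) := by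
  induction j with
  | zero => norm_num
  | succ j ih => rw [Finset.sum_range_succ, ← ih]; ring

theorem add_two_mem_lengths_two_nsmul (j : ℕ) : j + 2 ∈ PM.Lengths 𝒫 (2 • (2 / 3)) := by
  refine ⟨(Finset.range j).val.map (fun i => (2 / 3 : ℚ) ^ (i + 2)) +
    replicate 2 ((2 / 3) ^ (j + 1)), ⟨fun a ha => ?_, ?_⟩, by simp⟩
  · rcases mem_add.mp ha with ha | ha
    · obtain ⟨i, -, rfl⟩ := mem_map.mp ha
      exact isAtom_two_thirds_pow (i + 1)
    · exact eq_of_mem_replicate ha ▸ isAtom_two_thirds_pow j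
  · rw [sum_add, ← Finset.sum_eq_multiset_sum, sum_replicate, nsmul_eq_mul, nsmul_eq_mul]
    exact_mod_cast sum_range_two_thirds_pow_add j

theorem stmt11 :
    let A : Set ℚ := {q | ∃ n : ℕ, q = (2 / 3 : ℚ) ^ (n + 1)}
    let P := AddSubmonoid.closure A
    PM.Atomic P ∧ {a : ℚ | PM.IsAtom P a} = A ∧
      ∀ k ≥ 2, (PM.U P k).Infinite := by
  have hA : {q : ℚ | ∃ n : ℕ, q = (2 / 3 : ℚ) ^ (n + 1)} =
      Set.range fun n : ℕ => (2 / 3 : ℚ) ^ (n + 1) :=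
    Set.ext fun _ => exists_congr fun _ => eq_comm
  dsimp only
  rw [hA]
  have hatoms : {a | PM.IsAtom 𝒫 a} = Set.range fun n : ℕ => (2 / 3 : ℚ) ^ (n + 1) :=
    PM.setOf_isAtom_closure_eq (fun ⟨n, hn⟩ => absurd hn (by positivity))
      (by rintro _ ⟨m, rfl⟩; exact isAtom_two_thirds_pow m)
  refine ⟨by rw [PM.Atomic, hatoms], hatoms, fun k hk => ?_⟩
  obtain ⟨j, rfl⟩ := Nat.exists_eq_add_of_le' hk
  have h23 : PM.IsAtom 𝒫 (2 / 3) := by simpa using isAtom_two_thirds_pow 0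
  have hlen : ∀ i, j + (i + 2) ∈ PM.Lengths 𝒫 (j • (2 / 3) + 2 • (2 / 3)) := fun i =>
    PM.add_mem_lengths (PM.mem_lengths_nsmul h23 j) (add_two_mem_lengths_two_nsmul i)
  exact PM.infinite_U_of_mem_lengths (hlen 0)
    (Set.infinite_of_injective_forall_mem (fun _ _ h => by simpa using h) hlen)
end
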